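/- arXiv:1512.05531 — 7 statements merged into one kernel-verified Lean document; each statement's English description precedes it below -/
import Mathlib

section
/- Let ℋ be a k-uniform family of subsets of [n] such that every subfamily of at most k+1 members has a common element. Then all members of ℋ have a common element, i.e. ⋂_{H∈ℋ} H ≠ ∅. -/
/-- Helly-type result: if every subfamily of at most k+1 members of a k-uniform
family ℋ of subsets of [n] has a common element, then all members of ℋ have a
common element. -/
theorem stmt_2 (n k : ℕ)
    (ℋ : Finset (Finset (Fin n)))
    (huniform : ∀ H ∈ ℋ, H.card = k)
    (hhelly : ∀ 𝒢 ⊆ ℋ, 𝒢.card ≤ k + 1 → (𝒢.inf id).Nonempty) :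
    (ℋ.inf id).Nonempty := by
  by_contra hne
  rw [Finset.not_nonempty_iff_eq_empty] at hne
  have hS : ℋ ∈ ℋ.powerset.filter (fun 𝒢 => 𝒢.inf id = ∅) := by
    simp [hne]
  obtain ⟨𝒢, h𝒢mem, hmin⟩ :=
    Finset.exists_min_image (ℋ.powerset.filter (fun 𝒢 => 𝒢.inf id = ∅))
      Finset.card ⟨ℋ, hS⟩
  simp only [Finset.mem_filter, Finset.mem_powerset] at h𝒢mem
  obtain ⟨h𝒢sub, h𝒢inf⟩ := h𝒢mem
  have hcard : k + 2 ≤ 𝒢.card := by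
    by_contra h
    push_neg at h
    have hne' := hhelly 𝒢 h𝒢sub (by omega)
    rw [h𝒢inf] at hne'
    exact absurd hne' (by simp)
  have key : ∀ G ∈ 𝒢, ((𝒢.erase G).inf id).Nonempty := by
    intro G hG
    by_contra h
    rw [Finset.not_nonempty_iff_eq_empty] at h
    have hmem : 𝒢.erase G ∈ ℋ.powerset.filter (fun 𝒢 => 𝒢.inf id = ∅) := by
      simp only [Finset.mem_filter, Finset.mem_powerset]
      exact ⟨(Finset.erase_subset _ _).trans h𝒢sub, h⟩
    have h1 := hmin _ hmem
    have h2 := Finset.card_erase_lt_of_mem hG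
    omega
  choose x hx using key
  have h𝒢ne : 𝒢.Nonempty := Finset.card_pos.mp (by omega)
  obtain ⟨G₀, hG₀⟩ := h𝒢ne
  have hxmem : ∀ G (hG : G ∈ 𝒢), ∀ G' ∈ 𝒢, G' ≠ G → x G hG ∈ G' := by
    intro G hG G' hG' hne'
    have := hx G hG
    rw [Finset.mem_inf] at this
    exact this G' (Finset.mem_erase.mpr ⟨hne', hG'⟩)
  have hxnotin : ∀ G (hG : G ∈ 𝒢), x G hG ∉ G := by
    intro G hG hmem
    have : x G hG ∈ 𝒢.inf id := by
      rw [Finset.mem_inf]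
      intro G' hG'
      by_cases h : G' = G
      · subst h; exact hmem
      · exact hxmem G hG G' hG' h
    rw [h𝒢inf] at this
    simp at this
  set f : Finset (Fin n) → Fin n := fun G => if h : G ∈ 𝒢 then x G h else x G₀ hG₀ with hf
  have hmaps : ∀ G ∈ 𝒢.erase G₀, f G ∈ G₀ := by
    intro G hG
    obtain ⟨hne', hGm⟩ := Finset.mem_erase.mp hG
    simp only [hf, dif_pos hGm]
    exact hxmem G hGm G₀ hG₀ (fun h => hne' h.symm)
  have hinj : Set.InjOn f (𝒢.erase G₀) := by
    intro G hG G' hG' heq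
    by_contra hneq
    obtain ⟨_, hGm⟩ := Finset.mem_erase.mp hG
    obtain ⟨_, hG'm⟩ := Finset.mem_erase.mp hG'
    have h1 : f G ∈ G' := by
      simp only [hf, dif_pos hGm]
      exact hxmem G hGm G' hG'm (fun h => hneq h.symm)
    rw [heq] at h1
    simp only [hf, dif_pos hG'm] at h1
    exact hxnotin G' hG'm h1
  have hle : (𝒢.erase G₀).card ≤ G₀.card :=
    Finset.card_le_card_of_injOn f hmaps hinj
  rw [huniform G₀ (h𝒢sub hG₀), Finset.card_erase_of_mem hG₀] at hle
  omega
end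

section
/- Let 0 < s ≤ k ≤ n be positive integers and L = {ℓ₁ < ℓ₂ < … < ℓ_s} a set of s positive integers. Suppose n ≥ C(k², ℓ₁+1)·s + ℓ₁. Let ℱ be an L-intersecting, k-uniform family of subsets of [n] such that ⋂_{F∈ℱ} F = ∅. Then |ℱ| ≤ C(n−ℓ₁, s). -/
/-!
Fix `F₁ ∈ ℱ` and, since the total intersection is empty, a member `G a ∌ a` for each `a ∈ F₁`.
The set `W = F₁ ∪ ⋃ₐ G a` has at most `k²` points, and every `F ∈ ℱ` meets `W` in more than
`ℓ₁` points: otherwise `F ∩ F₁ = F ∩ W = F ∩ G a` for any `a ∈ F ∩ F₁`, although `a ∉ G a`.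
Hence `ℱ` is covered by the stars `{F | B ⊆ F}` of the `(ℓ₁ + 1)`-subsets `B` of `W`. Removing `B`
from the members of a star leaves a `(k - ℓ₁ - 1)`-uniform family on `n - ℓ₁ - 1` points with at
most `s - 1` intersection sizes, so by the Ray-Chaudhuri–Wilson bound each star has at most
`C(n - ℓ₁ - 1, s - 1)` members, and `C(k², ℓ₁ + 1) · C(n - ℓ₁ - 1, s - 1) ≤ C(n - ℓ₁, s)` by the
assumption on `n`.
-/

open Finset

namespace Nat

theorem choose_le_choose_right_of_le_half {N a b : ℕ} (hab : a ≤ b) (hb : b ≤ N / 2) :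
    N.choose a ≤ N.choose b := by
  induction b, hab using Nat.le_induction with
  | base => rfl
  | succ c _ ih => exact (ih (by omega)).trans (Nat.choose_le_succ_of_lt_half_left (by omega))

theorem two_le_choose {m r : ℕ} (hr₀ : 0 < r) (hrm : r < m) : 2 ≤ m.choose r := by
  have hpos := Nat.choose_pos hrm.le
  have hne : m.choose r ≠ 1 := fun h => by rcases Nat.choose_eq_one_iff.1 h with h | h <;> omega
  omega

theorem mul_choose_pred_le_choose {c N s : ℕ} (hs : 0 < s) (h : c * s ≤ N) :
    c * (N - 1).choose (s - 1) ≤ N.choose s := by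
  obtain ⟨s, rfl⟩ : ∃ t, s = t + 1 := ⟨s - 1, by omega⟩
  rcases N with _ | N
  · simp_all
  refine Nat.le_of_mul_le_mul_right ?_ s.succ_pos
  simp only [Nat.add_sub_cancel]
  calc c * N.choose s * (s + 1) = c * (s + 1) * N.choose s := by ring
    _ ≤ (N + 1) * N.choose s := Nat.mul_le_mul_right _ h
    _ = (N + 1).choose (s + 1) * (s + 1) := Nat.add_one_mul_choose_eq N s

end Nat

namespace Finset

variable {α : Type*} [DecidableEq α]

theorem card_inter_lt_of_card_eq_of_ne {E F : Finset α} {k : ℕ}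
    (hE : E.card = k) (hF : F.card = k) (hEF : E ≠ F) : (E ∩ F).card < k := by
  refine lt_of_le_of_ne (hE ▸ card_le_card inter_subset_left) fun h => hEF ?_
  have hEF' : E ∩ F = E := eq_of_subset_of_card_le inter_subset_left (by omega)
  exact eq_of_subset_of_card_le (inter_eq_left.1 hEF') (by omega)

section RayChaudhuriWilson

variable (𝒢 : Finset (Finset α))

noncomputable def subsetIndicator (T : Finset α) : 𝒢 → ℚ :=
  fun G => if T ⊆ (G : Finset α) then 1 else 0

def interCard (F : Finset α) : 𝒢 → ℚ := fun G => ((G : Finset α) ∩ F).card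

variable {𝒢}

theorem sum_subsetIndicator_insert {T F : Finset α} (hTF : T ⊆ F) :
    ∑ i ∈ F \ T, subsetIndicator 𝒢 (insert i T) =
      (interCard 𝒢 F - T.card) * subsetIndicator 𝒢 T := by
  funext G
  simp only [subsetIndicator, interCard, Finset.sum_apply, Pi.mul_apply, Pi.sub_apply,
    Pi.natCast_apply, insert_subset_iff]
  by_cases hTG : T ⊆ (G : Finset α)
  · have hfilter : (F \ T).filter (· ∈ (G : Finset α)) = ((G : Finset α) ∩ F) \ T := by
      ext x; simp only [mem_filter, mem_sdiff, mem_inter]; tauto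
    have hT : T ⊆ (G : Finset α) ∩ F := subset_inter hTG hTF
    simp only [hTG, and_true, if_true, mul_one, sum_boole, hfilter, card_sdiff_of_subset hT,
      Nat.cast_sub (card_le_card hT)]
  · simp [hTG]

theorem interCard_eq_of_forall_subset {S : Finset α} {k : ℕ} (hS : ∀ G ∈ 𝒢, G ⊆ S)
    (hk : ∀ G ∈ 𝒢, G.card = k) : interCard 𝒢 S = k := by
  funext G
  simp [interCard, inter_eq_left.2 (hS G G.2), hk G G.2]

theorem interCard_sub_mul_mem_span {F : Finset α} {c : ℕ} (a : ℕ) {g : 𝒢 → ℚ}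
    (hg : g ∈ Submodule.span ℚ (subsetIndicator 𝒢 '' {T | T ⊆ F ∧ T.card ≤ c})) :
    (interCard 𝒢 F - a) * g ∈
      Submodule.span ℚ (subsetIndicator 𝒢 '' {T | T ⊆ F ∧ T.card ≤ c + 1}) := by
  induction hg using Submodule.span_induction with
  | mem x hx =>
    obtain ⟨T, ⟨hTF, hTc⟩, rfl⟩ := hx
    have hsplit : (interCard 𝒢 F - a) * subsetIndicator 𝒢 T =
        ∑ i ∈ F \ T, subsetIndicator 𝒢 (insert i T) +
          ((T.card : ℚ) - a) • subsetIndicator 𝒢 T := by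
      rw [sum_subsetIndicator_insert hTF]
      funext G
      simp only [Pi.mul_apply, Pi.sub_apply, Pi.add_apply, Pi.smul_apply, Pi.natCast_apply,
        smul_eq_mul]
      ring
    rw [hsplit]
    refine add_mem (sum_mem fun i hi => Submodule.subset_span ⟨insert i T, ⟨?_, ?_⟩, rfl⟩)
      (Submodule.smul_mem _ _ (Submodule.subset_span ⟨T, ⟨hTF, by omega⟩, rfl⟩))
    · exact insert_subset (mem_sdiff.1 hi).1 hTF
    · grw [card_insert_le]; omega
  | zero => simp
  | add x y _ _ hx hy => simpa [mul_add] using add_mem hx hy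
  | smul r x _ hx => simpa [mul_smul_comm] using Submodule.smul_mem _ r hx

theorem prod_interCard_sub_mem_span (F : Finset α) (M : Finset ℕ) :
    ∏ m ∈ M, (interCard 𝒢 F - m) ∈
      Submodule.span ℚ (subsetIndicator 𝒢 '' {T | T ⊆ F ∧ T.card ≤ M.card}) := by
  induction M using Finset.induction with
  | empty =>
    refine Submodule.subset_span ⟨∅, ⟨empty_subset F, by simp⟩, ?_⟩
    funext G
    simp [subsetIndicator]
  | insert a M ha ih =>
    rw [prod_insert ha, card_insert_of_notMem ha]
    exact interCard_sub_mul_mem_span a ih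

theorem subsetIndicator_mem_span_powersetCard {S : Finset α} {k c : ℕ} (hS : ∀ G ∈ 𝒢, G ⊆ S)
    (hk : ∀ G ∈ 𝒢, G.card = k) (hck : c ≤ k) {T : Finset α} (hTS : T ⊆ S) (hTc : T.card ≤ c) :
    subsetIndicator 𝒢 T ∈
      Submodule.span ℚ ((S.powersetCard c).image (subsetIndicator 𝒢) : Set (𝒢 → ℚ)) := by
  obtain ⟨d, hd⟩ := Nat.exists_eq_add_of_le hTc
  clear hTc
  induction d generalizing T with
  | zero =>
    exact Submodule.subset_span (mem_coe.2 (mem_image_of_mem _ (mem_powersetCard.2 ⟨hTS, hd.symm⟩)))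
  | succ d ih =>
    have hkT : (k : ℚ) - T.card ≠ 0 :=
      sub_ne_zero.2 (by exact_mod_cast (show k ≠ T.card by omega))
    -- every `G ⊇ T` has exactly `k - |T|` one-point extensions of `T` inside it
    have hraise : subsetIndicator 𝒢 T =
        ((k : ℚ) - T.card)⁻¹ • ∑ i ∈ S \ T, subsetIndicator 𝒢 (insert i T) := by
      rw [sum_subsetIndicator_insert hTS, interCard_eq_of_forall_subset hS hk]
      funext G
      simp only [Pi.smul_apply, Pi.mul_apply, Pi.sub_apply, Pi.natCast_apply, smul_eq_mul]
      field_simp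
    rw [hraise]
    refine Submodule.smul_mem _ _ (sum_mem fun i hi => ?_)
    obtain ⟨hiS, hiT⟩ := mem_sdiff.1 hi
    exact ih (insert_subset hiS hTS) (by rw [card_insert_of_notMem hiT]; omega)

/-- The functions `G ↦ ∏ m ∈ M, (|G ∩ F| - m)`, `F ∈ 𝒢`, are diagonal on `𝒢`, hence linearly
independent, and they lie in the span of the indicators of the `C(|S|, |M|)` sets `T ⊆ S` with
`|T| = |M|`. -/
theorem card_le_choose_of_uniform_of_forall_card_inter_mem {S : Finset α} {k : ℕ}
    (hS : ∀ G ∈ 𝒢, G ⊆ S) (hk : ∀ G ∈ 𝒢, G.card = k) {M : Finset ℕ}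
    (hM : ∀ E ∈ 𝒢, ∀ F ∈ 𝒢, E ≠ F → (E ∩ F).card ∈ M) (hMk : ∀ m ∈ M, m < k) :
    𝒢.card ≤ S.card.choose M.card := by
  set f : 𝒢 → 𝒢 → ℚ := fun F => ∏ m ∈ M, (interCard 𝒢 F - m)
  have hf : ∀ F G : 𝒢, f F G = ∏ m ∈ M, ((((G : Finset α) ∩ F).card : ℚ) - m) := fun F G => by
    simp [f, Finset.prod_apply, interCard]
  have hdiag : ∀ F, f F F ≠ 0 := fun F => by
    rw [hf, inter_self, hk F F.2]
    exact prod_ne_zero_iff.2 fun m hm => sub_ne_zero.2 (by exact_mod_cast (hMk m hm).ne')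
  have hli : LinearIndependent ℚ f := by
    have hsingle : f = fun F => Pi.single F (f F F) := by
      funext F G
      rcases eq_or_ne G F with rfl | hGF
      · simp
      · rw [Pi.single_eq_of_ne hGF, hf]
        exact prod_eq_zero (hM _ G.2 _ F.2 (Subtype.coe_ne_coe.2 hGF)) (sub_self _)
    rw [hsingle]
    exact Pi.linearIndependent_single_of_ne_zero hdiag
  have hspan : Set.range f ⊆
      Submodule.span ℚ ((S.powersetCard M.card).image (subsetIndicator 𝒢) : Set (𝒢 → ℚ)) := by
    rintro _ ⟨F, rfl⟩
    refine Submodule.span_le.2 ?_ (prod_interCard_sub_mem_span (𝒢 := 𝒢) F M)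
    rintro _ ⟨T, ⟨hTF, hTc⟩, rfl⟩
    have hMcard : M.card ≤ k := by
      simpa using card_le_card (fun m hm => mem_range.2 (hMk m hm) : M ⊆ range k)
    exact subsetIndicator_mem_span_powersetCard hS hk hMcard (hTF.trans (hS F F.2)) hTc
  have hcard := linearIndependent_le_span_aux' f hli _ hspan
  simp only [coe_sort_coe, Fintype.card_coe] at hcard
  exact hcard.trans (card_image_le.trans (card_powersetCard _ _).le)

end RayChaudhuriWilson

variable {ℱ : Finset (Finset α)} {k ℓ : ℕ}

theorem card_le_choose_mul_of_le_card_inter (W : Finset α) {t m : ℕ}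
    (hcover : ∀ F ∈ ℱ, t ≤ (F ∩ W).card)
    (hstar : ∀ B ⊆ W, B.card = t → (ℱ.filter (B ⊆ ·)).card ≤ m) :
    ℱ.card ≤ W.card.choose t * m := by
  have hsub : ℱ ⊆ (W.powersetCard t).biUnion (fun B => ℱ.filter (B ⊆ ·)) := fun F hF => by
    obtain ⟨B, hBFW, hB⟩ := exists_subset_card_eq (hcover F hF)
    exact mem_biUnion.2 ⟨B, mem_powersetCard.2 ⟨hBFW.trans inter_subset_right, hB⟩,
      mem_filter.2 ⟨hF, hBFW.trans inter_subset_left⟩⟩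
  calc ℱ.card ≤ _ := card_le_card hsub
    _ ≤ (W.powersetCard t).card * m := card_biUnion_le_card_mul _ _ _ fun B hB =>
        hstar B (mem_powersetCard.1 hB).1 (mem_powersetCard.1 hB).2
    _ = W.card.choose t * m := by rw [card_powersetCard]

variable [Fintype α]

theorem exists_mem_notMem_of_inf_eq_empty (hempty : ℱ.inf id = ∅) (a : α) : ∃ G ∈ ℱ, a ∉ G := by
  by_contra! h
  exact notMem_empty a (hempty ▸ mem_inf.2 h)

theorem lt_of_uniform_of_inf_eq_empty (hunif : ∀ F ∈ ℱ, F.card = k)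
    (hint : ∀ E ∈ ℱ, ∀ F ∈ ℱ, E ≠ F → ℓ ≤ (E ∩ F).card) (hempty : ℱ.inf id = ∅)
    {F : Finset α} (hF : F ∈ ℱ) (hk : 0 < k) : ℓ < k := by
  obtain ⟨a, ha⟩ := card_pos.1 ((hunif F hF).symm ▸ hk)
  obtain ⟨G, hG, haG⟩ := exists_mem_notMem_of_inf_eq_empty hempty a
  have hssub : G ∩ F ⊂ F := ssubset_of_subset_of_ne inter_subset_right
    fun h => haG (mem_of_mem_inter_left (h ▸ ha))
  calc ℓ ≤ (G ∩ F).card := hint G hG F hF (by rintro rfl; exact haG ha)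
    _ < k := hunif F hF ▸ card_lt_card hssub

theorem exists_card_le_sq_forall_lt_card_inter (hunif : ∀ F ∈ ℱ, F.card = k)
    (hint : ∀ E ∈ ℱ, ∀ F ∈ ℱ, E ≠ F → ℓ ≤ (E ∩ F).card) (hℓ : 0 < ℓ) (hℓk : ℓ < k)
    (hempty : ℱ.inf id = ∅) {F₁ : Finset α} (hF₁ : F₁ ∈ ℱ) :
    ∃ W : Finset α, W.card ≤ k ^ 2 ∧ ∀ F ∈ ℱ, ℓ < (F ∩ W).card := by
  choose G hG haG using exists_mem_notMem_of_inf_eq_empty hempty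
  set W := F₁ ∪ F₁.biUnion fun a => G a \ F₁
  refine ⟨W, ?_, fun F hF => ?_⟩
  · have hGa : ∀ a ∈ F₁, (G a \ F₁).card ≤ k - 1 := fun a ha => by
      have hne : G a ≠ F₁ := fun h => haG a (h ▸ ha)
      have := card_inter_add_card_sdiff (G a) F₁
      have := hint _ (hG a) F₁ hF₁ hne
      have := hunif _ (hG a)
      omega
    calc _ ≤ F₁.card + (F₁.biUnion fun a => G a \ F₁).card := card_union_le _ _
      _ ≤ k + k * (k - 1) := add_le_add (hunif F₁ hF₁).le
          (card_biUnion_le_card_mul _ _ _ hGa |>.trans_eq (by rw [hunif F₁ hF₁]))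
      _ = k ^ 2 := by
        rcases k with _ | k
        · rfl
        · rw [Nat.add_sub_cancel]; ring
  · by_contra! hle
    have hne : ∀ F' ⊆ W, F ≠ F' := by
      rintro F' hF'W rfl
      rw [inter_eq_left.2 hF'W, hunif F hF] at hle
      omega
    have hF'W : ∀ F' ∈ ℱ, F' ⊆ W → F ∩ F' = F ∩ W := fun F' hF' hF'W =>
      eq_of_subset_of_card_le (inter_subset_inter_left hF'W)
        (hle.trans (hint F hF F' hF' (hne F' hF'W)))
    have hF₁W : F₁ ⊆ W := subset_union_left
    have hGW : ∀ a ∈ F₁, G a ⊆ W := fun a ha x hx => by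
      by_cases hxF₁ : x ∈ F₁
      · exact mem_union_left _ hxF₁
      · exact mem_union_right _ (mem_biUnion.2 ⟨a, ha, mem_sdiff.2 ⟨hx, hxF₁⟩⟩)
    obtain ⟨a, ha⟩ : (F ∩ F₁).Nonempty :=
      card_pos.1 (hℓ.trans_le (hint F hF F₁ hF₁ (hne F₁ hF₁W)))
    have haGa : a ∈ F ∩ G a := by
      rwa [hF'W _ (hG a) (hGW a (mem_inter.1 ha).2), ← hF'W F₁ hF₁ hF₁W]
    exact haG a (mem_inter.1 haGa).2

theorem card_filter_superset_le_choose {L : Finset ℕ} (hunif : ∀ F ∈ ℱ, F.card = k)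
    (hL : ∀ E ∈ ℱ, ∀ F ∈ ℱ, E ≠ F → (E ∩ F).card ∈ L) (B : Finset α) {t : ℕ}
    (hLt : (L.filter (B.card ≤ ·)).card ≤ t) (ht : 2 * t ≤ Fintype.card α - B.card) :
    (ℱ.filter (B ⊆ ·)).card ≤ (Fintype.card α - B.card).choose t := by
  set 𝒢 := (ℱ.filter (B ⊆ ·)).image (· \ B)
  set M := ((L.filter (B.card ≤ ·)).image (· - B.card)).filter (· < k - B.card)
  have hinj : Set.InjOn (· \ B) (ℱ.filter (B ⊆ ·)) := fun E hE F hF hEF => by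
    rw [← sdiff_union_of_subset (mem_filter.1 hE).2,
      ← sdiff_union_of_subset (mem_filter.1 hF).2]
    exact congrArg (· ∪ B) hEF
  have h𝒢 : ∀ G ∈ 𝒢, ∃ F ∈ ℱ, B ⊆ F ∧ G = F \ B := fun G hG => by
    obtain ⟨F, hF, rfl⟩ := mem_image.1 hG
    exact ⟨F, (mem_filter.1 hF).1, (mem_filter.1 hF).2, rfl⟩
  have h𝒢k : ∀ G ∈ 𝒢, G.card = k - B.card := fun G hG => by
    obtain ⟨F, hF, hBF, rfl⟩ := h𝒢 G hG
    rw [card_sdiff_of_subset hBF, hunif F hF]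
  have hM : ∀ E ∈ 𝒢, ∀ F ∈ 𝒢, E ≠ F → (E ∩ F).card ∈ M := by
    intro E hE F hF hEF
    obtain ⟨E', hE', hBE', rfl⟩ := h𝒢 E hE
    obtain ⟨F', hF', hBF', rfl⟩ := h𝒢 F hF
    have hB : B ⊆ E' ∩ F' := subset_inter hBE' hBF'
    have hcard : (E' \ B ∩ (F' \ B)).card = (E' ∩ F').card - B.card := by
      rw [← card_sdiff_of_subset hB]
      exact congrArg card inf_sdiff.symm
    refine mem_filter.2 ⟨mem_image.2 ⟨_, mem_filter.2 ⟨hL E' hE' F' hF' ?_, card_le_card hB⟩,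
      hcard.symm⟩, card_inter_lt_of_card_eq_of_ne (h𝒢k _ hE) (h𝒢k _ hF) hEF⟩
    rintro rfl
    exact hEF rfl
  have hS : ∀ G ∈ 𝒢, G ⊆ Bᶜ := fun G hG => by
    obtain ⟨F, -, -, rfl⟩ := h𝒢 G hG
    exact fun x hx => mem_compl.2 (mem_sdiff.1 hx).2
  have hMk : ∀ m ∈ M, m < k - B.card := fun m hm => (mem_filter.1 hm).2
  have hMt : M.card ≤ t := card_filter_le _ _ |>.trans (card_image_le.trans hLt)
  calc (ℱ.filter (B ⊆ ·)).card = 𝒢.card := (card_image_of_injOn hinj).symm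
    _ ≤ Bᶜ.card.choose M.card :=
        card_le_choose_of_uniform_of_forall_card_inter_mem hS h𝒢k hM hMk
    _ ≤ (Fintype.card α - B.card).choose t := by
      rw [card_compl]
      exact Nat.choose_le_choose_right_of_le_half hMt (by omega)

end Finset

theorem stmt_3_general (n k s ℓ₁ : ℕ) (hs : 0 < s) (hsk : s ≤ k)
    (L : Finset ℕ) (hLcard : L.card = s) (hLpos : ∀ ℓ ∈ L, 0 < ℓ)
    (hℓ₁ : ℓ₁ ∈ L) (hmin : ∀ ℓ ∈ L, ℓ₁ ≤ ℓ)
    (hn : (k ^ 2).choose (ℓ₁ + 1) * s + ℓ₁ ≤ n)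
    (ℱ : Finset (Finset (Fin n)))
    (huniform : ∀ F ∈ ℱ, F.card = k)
    (hL : ∀ E ∈ ℱ, ∀ F ∈ ℱ, E ≠ F → (E ∩ F).card ∈ L)
    (hempty : ℱ.inf id = ∅) :
    ℱ.card ≤ (n - ℓ₁).choose s := by
  have hℓ₁pos : 0 < ℓ₁ := hLpos ℓ₁ hℓ₁
  have hint : ∀ E ∈ ℱ, ∀ F ∈ ℱ, E ≠ F → ℓ₁ ≤ (E ∩ F).card :=
    fun E hE F hF hEF => hmin _ (hL E hE F hF hEF)
  obtain ⟨F₁, hF₁, -⟩ := exists_mem_notMem_of_inf_eq_empty hempty (⟨0, by omega⟩ : Fin n)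
  have hℓ₁k : ℓ₁ < k := lt_of_uniform_of_inf_eq_empty huniform hint hempty hF₁ (by omega)
  obtain ⟨W, hW, hcover⟩ :=
    exists_card_le_sq_forall_lt_card_inter huniform hint hℓ₁pos hℓ₁k hempty hF₁
  have hchoose : 2 * s ≤ (k ^ 2).choose (ℓ₁ + 1) * s :=
    Nat.mul_le_mul_right s (Nat.two_le_choose (by omega) (by nlinarith))
  have hstar : ∀ B ⊆ W, B.card = ℓ₁ + 1 →
      (ℱ.filter (B ⊆ ·)).card ≤ (n - ℓ₁ - 1).choose (s - 1) := by
    intro B _ hB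
    have hLs : (L.filter (B.card ≤ ·)).card ≤ s - 1 := by
      rw [← hLcard, ← card_erase_of_mem hℓ₁]
      exact card_le_card fun ℓ hℓ => mem_erase.2 ⟨by grind, (mem_filter.1 hℓ).1⟩
    simpa [hB, Nat.sub_sub] using
      card_filter_superset_le_choose huniform hL B hLs
        (by simp only [Fintype.card_fin, hB]; omega)
  calc ℱ.card ≤ W.card.choose (ℓ₁ + 1) * (n - ℓ₁ - 1).choose (s - 1) :=
        card_le_choose_mul_of_le_card_inter W hcover hstar
    _ ≤ (k ^ 2).choose (ℓ₁ + 1) * (n - ℓ₁ - 1).choose (s - 1) := by gcongr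
    _ ≤ (n - ℓ₁).choose s := Nat.mul_choose_pred_le_choose hs (by omega)

/-- Proposition: if n ≥ C(k², ℓ₁+1)·s + ℓ₁ and ℱ is an L-intersecting k-uniform
family of subsets of [n] with empty total intersection, where L consists of s
positive integers with minimum ℓ₁, then |ℱ| ≤ C(n-ℓ₁, s). -/
theorem stmt_3 (n k s ℓ₁ : ℕ) (hs : 0 < s) (hsk : s ≤ k) (hkn : k ≤ n)
    (L : Finset ℕ) (hLcard : L.card = s) (hLpos : ∀ ℓ ∈ L, 0 < ℓ)
    (hℓ₁ : ℓ₁ ∈ L) (hmin : ∀ ℓ ∈ L, ℓ₁ ≤ ℓ)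
    (hn : (k ^ 2).choose (ℓ₁ + 1) * s + ℓ₁ ≤ n)
    (ℱ : Finset (Finset (Fin n)))
    (huniform : ∀ F ∈ ℱ, F.card = k)
    (hL : ∀ E ∈ ℱ, ∀ F ∈ ℱ, E ≠ F → (E ∩ F).card ∈ L)
    (hempty : ℱ.inf id = ∅) :
    ℱ.card ≤ (n - ℓ₁).choose s :=
  stmt_3_general n k s ℓ₁ hs hsk L hLcard hLpos hℓ₁ hmin hn ℱ huniform hL hempty
end

section
/- Let 0 < s < k ≤ n be positive integers and L = {1, 2, …, s}. Suppose n > C(k², 2)·s. Let ℱ be an L-intersecting, k-uniform family of subsets of [n]. Then |ℱ| ≤ C(n−1, s). -/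
/-!
If all members share a point, fix for each member `F` a `s`-subset of `F` minus that point:
two members containing the same such subset would meet in `s + 1` points, so the members
inject into the `s`-subsets of the remaining `n - 1` points.

Otherwise the family is intersecting (the intersection sizes are at least `1`) without a
common point. Fix a member `F₁` and, for each `y ∈ F₁`, a member `G_y` avoiding `y`. Every
member meets `F₁` in some `y` and `G_y` in a point other than `y`, so it meets
`U = F₁ ∪ ⋃ G_y`, a set of at most `k²` points, in at least two points. The members through a
fixed pair are at most `C(n - 2, s - 1)` by the first argument, and there are at most
`C(k², 2)` pairs; this is at most `C(n - 1, s)` once `n - 1 ≥ C(k², 2) s`.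
-/

open Finset

theorem Nat.mul_choose_pred_le {c n s : ℕ} (hs : 0 < s) (h : c * s ≤ n) :
    c * (n - 1).choose (s - 1) ≤ n.choose s := by
  obtain ⟨t, rfl⟩ : ∃ t, s = t + 1 := ⟨s - 1, by omega⟩
  rcases n with _ | m
  · simp [Nat.eq_zero_of_le_zero (Nat.le_of_mul_le_mul_right (by simpa using h) hs)]
  refine Nat.le_of_mul_le_mul_right (c := t + 1) ?_ hs
  calc c * m.choose t * (t + 1) = c * (t + 1) * m.choose t := by ring
    _ ≤ (m + 1) * m.choose t := Nat.mul_le_mul_right _ h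
    _ = (m + 1).choose (t + 1) * (t + 1) := Nat.add_one_mul_choose_eq m t

section Families

variable {α : Type*} [DecidableEq α] {ℱ : Finset (Finset α)} {k s : ℕ}

theorem card_le_choose_of_forall_superset [Fintype α] {p : Finset α} {j : ℕ}
    (huniform : ∀ F ∈ ℱ, F.card = k) (hp : ∀ F ∈ ℱ, p ⊆ F)
    (hinter : ∀ E ∈ ℱ, ∀ F ∈ ℱ, E ≠ F → (E ∩ F).card ≤ s)
    (hsj : s < p.card + j) (hjk : p.card + j ≤ k) :
    ℱ.card ≤ (Fintype.card α - p.card).choose j := by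
  rw [← card_compl, ← card_powersetCard]
  refine card_le_card_of_forall_subsingleton (fun F T => T ⊆ F) (fun F hF => ?_) ?_
  · have hcard : j ≤ (F \ p).card := by
      rw [card_sdiff_of_subset (hp F hF), huniform F hF]; omega
    obtain ⟨T, hTF, hTj⟩ := exists_subset_card_eq hcard
    refine ⟨T, mem_powersetCard.2 ⟨hTF.trans ?_, hTj⟩, hTF.trans sdiff_subset⟩
    exact fun x hx => mem_compl.2 (mem_sdiff.1 hx).2
  · intro T hT E ⟨hE, hTE⟩ F ⟨hF, hTF⟩
    obtain ⟨hTp, hTj⟩ := mem_powersetCard.1 hT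
    by_contra hEF
    have hdisj : Disjoint T p := disjoint_left.2 fun x hx => mem_compl.1 (hTp hx)
    have : (T ∪ p).card ≤ (E ∩ F).card :=
      card_le_card (union_subset (subset_inter hTE hTF) (subset_inter (hp E hE) (hp F hF)))
    rw [card_union_of_disjoint hdisj] at this
    have := hinter E hE F hF hEF
    omega

theorem exists_card_le_sq_forall_two_le_card_inter (huniform : ∀ F ∈ ℱ, F.card = k)
    (hℱ : (ℱ : Set (Finset α)).Intersecting) (hstar : ∀ x, ∃ F ∈ ℱ, x ∉ F)
    (hne : ℱ.Nonempty) :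
    ∃ U : Finset α, U.card ≤ k ^ 2 ∧ ∀ F ∈ ℱ, 2 ≤ (F ∩ U).card := by
  obtain ⟨F₁, hF₁⟩ := hne
  choose G hG hyG using hstar
  have hmeet : ∀ {E F}, E ∈ ℱ → F ∈ ℱ → (E ∩ F).Nonempty := fun hE hF =>
    not_disjoint_iff_nonempty_inter.1 (hℱ hE hF)
  set U := F₁ ∪ F₁.biUnion fun y => G y \ F₁
  refine ⟨U, ?_, fun F hF => ?_⟩
  · have hG_sdiff : ∀ y ∈ F₁, (G y \ F₁).card ≤ k - 1 := fun y _ => by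
      have := card_sdiff_add_card_inter (G y) F₁
      have := (hmeet (hG y) hF₁).card_pos
      have := huniform _ (hG y)
      omega
    calc U.card ≤ F₁.card + (F₁.biUnion fun y => G y \ F₁).card := card_union_le _ _
      _ ≤ k + k * (k - 1) := by
        have := card_biUnion_le_card_mul F₁ _ _ hG_sdiff
        rw [huniform F₁ hF₁] at this ⊢
        omega
      _ = k ^ 2 := by rcases k with _ | k <;> simp [pow_two, Nat.mul_succ, Nat.add_comm]
  · obtain ⟨y, hy⟩ := hmeet hF hF₁
    obtain ⟨hyF, hyF₁⟩ := mem_inter.1 hy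
    obtain ⟨z, hz⟩ := hmeet hF (hG y)
    obtain ⟨hzF, hzG⟩ := mem_inter.1 hz
    have hzU : z ∈ U := by
      by_cases hzF₁ : z ∈ F₁
      · exact mem_union_left _ hzF₁
      · exact mem_union_right _ (mem_biUnion.2 ⟨y, hyF₁, mem_sdiff.2 ⟨hzG, hzF₁⟩⟩)
    refine one_lt_card.2 ⟨y, mem_inter.2 ⟨hyF, mem_union_left _ hyF₁⟩, z,
      mem_inter.2 ⟨hzF, hzU⟩, ?_⟩
    rintro rfl
    exact hyG y hzG

theorem card_le_choose_two_mul_of_forall_not_mem [Fintype α]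
    (huniform : ∀ F ∈ ℱ, F.card = k) (hℱ : (ℱ : Set (Finset α)).Intersecting)
    (hstar : ∀ x, ∃ F ∈ ℱ, x ∉ F) (hinter : ∀ E ∈ ℱ, ∀ F ∈ ℱ, E ≠ F → (E ∩ F).card ≤ s)
    (hs : 0 < s) (hsk : s < k) :
    ℱ.card ≤ (k ^ 2).choose 2 * (Fintype.card α - 2).choose (s - 1) := by
  rcases ℱ.eq_empty_or_nonempty with rfl | hne
  · simp
  obtain ⟨U, hUk, hU⟩ := exists_card_le_sq_forall_two_le_card_inter huniform hℱ hstar hne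
  have hcover : ℱ ⊆ (U.powersetCard 2).biUnion fun q => ℱ.filter (q ⊆ ·) := fun F hF => by
    obtain ⟨q, hqFU, hq⟩ := exists_subset_card_eq (hU F hF)
    exact mem_biUnion.2 ⟨q, mem_powersetCard.2 ⟨hqFU.trans inter_subset_right, hq⟩,
      mem_filter.2 ⟨hF, hqFU.trans inter_subset_left⟩⟩
  have hpair : ∀ q ∈ U.powersetCard 2,
      (ℱ.filter (q ⊆ ·)).card ≤ (Fintype.card α - 2).choose (s - 1) := fun q hq => by
    have hq := (mem_powersetCard.1 hq).2
    have := card_le_choose_of_forall_superset (j := s - 1) (p := q)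
      (fun F hF => huniform F (mem_filter.1 hF).1) (fun F hF => (mem_filter.1 hF).2)
      (fun E hE F hF => hinter E (mem_filter.1 hE).1 F (mem_filter.1 hF).1) (by omega) (by omega)
    rwa [hq] at this
  calc ℱ.card ≤ ((U.powersetCard 2).biUnion fun q => ℱ.filter (q ⊆ ·)).card := card_le_card hcover
    _ ≤ (U.powersetCard 2).card * (Fintype.card α - 2).choose (s - 1) :=
      card_biUnion_le_card_mul _ _ _ hpair
    _ ≤ (k ^ 2).choose 2 * (Fintype.card α - 2).choose (s - 1) := by
      rw [card_powersetCard]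
      gcongr

end Families

theorem stmt_6_general (n k s : ℕ) (hs : 0 < s) (hsk : s < k)
    (hn : (k ^ 2).choose 2 * s < n)
    (ℱ : Finset (Finset (Fin n)))
    (huniform : ∀ F ∈ ℱ, F.card = k)
    (hL : ∀ E ∈ ℱ, ∀ F ∈ ℱ, E ≠ F → (E ∩ F).card ∈ Finset.Icc 1 s) :
    ℱ.card ≤ (n - 1).choose s := by
  have hinter : ∀ E ∈ ℱ, ∀ F ∈ ℱ, E ≠ F → (E ∩ F).card ≤ s := fun E hE F hF hEF =>
    (mem_Icc.1 (hL E hE F hF hEF)).2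
  by_cases hstar : ∃ x, ∀ F ∈ ℱ, x ∈ F
  · obtain ⟨x, hx⟩ := hstar
    simpa using card_le_choose_of_forall_superset (p := {x}) (j := s) huniform
      (fun F hF => singleton_subset_iff.2 (hx F hF)) hinter (by simp) (by simp; omega)
  push Not at hstar
  have hℱ : (ℱ : Set (Finset (Fin n))).Intersecting := fun E hE F hF => by
    rw [not_disjoint_iff_nonempty_inter, ← card_pos]
    by_cases hEF : E = F
    · rw [hEF, inter_self, huniform F hF]; omega
    · exact (mem_Icc.1 (hL E hE F hF hEF)).1
  have := card_le_choose_two_mul_of_forall_not_mem huniform hℱ hstar hinter hs hsk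
  rw [Fintype.card_fin, show n - 2 = n - 1 - 1 by omega] at this
  exact this.trans (Nat.mul_choose_pred_le hs (by omega))

/-- Uniform Frankl–Füredi: if 0 < s < k ≤ n, n > C(k²,2)·s, and ℱ is a
{1,…,s}-intersecting k-uniform family of subsets of [n], then |ℱ| ≤ C(n-1, s). -/
theorem stmt_6 (n k s : ℕ) (hs : 0 < s) (hsk : s < k) (hkn : k ≤ n)
    (hn : (k ^ 2).choose 2 * s < n)
    (ℱ : Finset (Finset (Fin n)))
    (huniform : ∀ F ∈ ℱ, F.card = k)
    (hL : ∀ E ∈ ℱ, ∀ F ∈ ℱ, E ≠ F → (E ∩ F).card ∈ Finset.Icc 1 s) :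
    ℱ.card ≤ (n - 1).choose s :=
  stmt_6_general n k s hs hsk hn ℱ huniform hL
end

section
/- Let 0 < s < k ≤ n be positive integers and L = {1, 2, …, s}. Suppose n > C(k², 2)·s + 1. Let ℱ be an L-intersecting, k-uniform family of subsets of [n] with |ℱ| = C(n−1, s). Then ⋂_{F∈ℱ} F ≠ ∅. -/
/-!
Suppose the members of `ℱ` have no common point. Fix `F₁ ∈ ℱ` and, for every point `x`, a member
`G x` missing `x`. Every `F ∈ ℱ` meets `F₁` in some `x` and `G x` in some `y ≠ x`, so `F` is one
of the members through a pair `{x, y}` with `x ∈ F₁`, `y ∈ G x`: at most `k²` pairs. Since no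
`s + 1` points lie in two members, double counting `(s + 1)`-sets through such a pair bounds the
members through it by `C(n - 2, s - 1)`. Hence `|ℱ| ≤ k² C(n - 2, s - 1) < C(n - 1, s)`, the last
step because `s C(n - 1, s) = (n - 1) C(n - 2, s - 1)` and `k² s < n - 1`.
-/

open Finset

namespace Finset

variable {α : Type*} [Fintype α] [DecidableEq α]

theorem card_filter_superset_mul_choose_le {ℱ : Finset (Finset α)} {k s m : ℕ}
    (huniform : ∀ F ∈ ℱ, #F = k) (hinter : ∀ E ∈ ℱ, ∀ F ∈ ℱ, E ≠ F → #(E ∩ F) ≤ s)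
    (T : Finset α) (hTm : #T + m = s + 1) :
    #{F ∈ ℱ | T ⊆ F} * (k - #T).choose m ≤ (Fintype.card α - #T).choose m := by
  -- double count pairs `(F, U)` with `T ⊆ F ∈ ℱ`, `U ⊆ F \ T` and `#U = m`
  have hcount := card_mul_le_card_mul (fun F U => U ⊆ F) (s := {F ∈ ℱ | T ⊆ F})
    (t := powersetCard m Tᶜ) (m := (k - #T).choose m) (n := 1) ?above ?below
  · simpa [card_compl] using hcount
  case above =>
    intro F hF
    obtain ⟨hFℱ, hTF⟩ := mem_filter.mp hF
    have hsets : bipartiteAbove (fun F U => U ⊆ F) (powersetCard m Tᶜ) F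
        = powersetCard m (F \ T) := by
      ext U
      simp only [bipartiteAbove, mem_filter, mem_powersetCard, subset_sdiff,
        subset_compl_iff_disjoint_right]
      tauto
    rw [hsets, card_powersetCard, card_sdiff_of_subset hTF, huniform F hFℱ]
  case below =>
    intro U hU
    obtain ⟨hUT, hUm⟩ := mem_powersetCard.mp hU
    refine card_le_one.mpr fun E hE F hF => by_contra fun hEF => ?_
    simp only [bipartiteBelow, mem_filter] at hE hF
    have hsub : T ∪ U ⊆ E ∩ F :=
      union_subset (subset_inter hE.1.2 hF.1.2) (subset_inter hE.2 hF.2)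
    have hdisj : Disjoint T U := disjoint_comm.mp (subset_compl_iff_disjoint_right.mp hUT)
    have hle := card_le_card hsub
    rw [card_union_of_disjoint hdisj, hUm] at hle
    have := hinter E hE.1.1 F hF.1.1 hEF
    omega

theorem card_le_of_intersecting_of_inf_eq_empty {ℱ : Finset (Finset α)} {k N : ℕ}
    (huniform : ∀ F ∈ ℱ, #F = k) (hℱ : (ℱ : Set (Finset α)).Intersecting)
    (hinf : ℱ.inf id = ∅) (hpair : ∀ x y, x ≠ y → #{F ∈ ℱ | {x, y} ⊆ F} ≤ N) :
    #ℱ ≤ k * k * N := by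
  obtain rfl | ⟨F₁, hF₁⟩ := ℱ.eq_empty_or_nonempty
  · simp
  have hmiss : ∀ x, ∃ G ∈ ℱ, x ∉ G := fun x => by
    by_contra! h
    simpa [hinf] using (mem_inf (f := id)).mpr h
  choose G hG hxG using hmiss
  have hcover : ℱ ⊆ F₁.biUnion fun x => (G x).biUnion fun y => {F ∈ ℱ | {x, y} ⊆ F} := by
    intro F hF
    obtain ⟨x, hxF, hxF₁⟩ := not_disjoint_iff.mp (hℱ hF hF₁)
    obtain ⟨y, hyF, hyG⟩ := not_disjoint_iff.mp (hℱ hF (hG x))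
    simp only [mem_biUnion, mem_filter, insert_subset_iff, singleton_subset_iff]
    exact ⟨x, hxF₁, y, hyG, hF, hxF, hyF⟩
  have hfibre : ∀ x ∈ F₁, #((G x).biUnion fun y => {F ∈ ℱ | {x, y} ⊆ F}) ≤ k * N :=
    fun x _ => calc
      _ ≤ #(G x) * N := card_biUnion_le_card_mul _ _ _ fun y hy =>
        hpair x y (ne_of_mem_of_not_mem hy (hxG x)).symm
      _ = k * N := by rw [huniform _ (hG x)]
  calc #ℱ ≤ #F₁ * (k * N) := (card_le_card hcover).trans <| card_biUnion_le_card_mul _ _ _ hfibre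
    _ = k * k * N := by rw [huniform F₁ hF₁, mul_assoc]

end Finset

theorem Nat.le_choose_two {m : ℕ} (hm : 3 ≤ m) : m ≤ m.choose 2 := by
  rw [Nat.choose_two_right, Nat.le_div_iff_mul_le two_pos]
  exact Nat.mul_le_mul_left m (by omega)

theorem Nat.mul_choose_pred_lt_choose {a s N : ℕ} (hs : 0 < s) (hsN : s ≤ N) (h : a * s < N) :
    a * (N - 1).choose (s - 1) < N.choose s := by
  obtain ⟨s, rfl⟩ : ∃ s', s = s' + 1 := ⟨s - 1, by omega⟩
  obtain ⟨N, rfl⟩ : ∃ N', N = N' + 1 := ⟨N - 1, by omega⟩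
  have hpos : 0 < N.choose s := Nat.choose_pos (by omega)
  refine Nat.lt_of_mul_lt_mul_right (a := s + 1) ?_
  calc a * N.choose s * (s + 1) = a * (s + 1) * N.choose s := by ring
    _ < (N + 1) * N.choose s := Nat.mul_lt_mul_of_pos_right (by simpa using h) hpos
    _ = (N + 1).choose (s + 1) * (s + 1) := Nat.add_one_mul_choose_eq N s

theorem stmt_7_general (n k s : ℕ) (hs : 0 < s) (hsk : s < k)
    (hn : (k ^ 2).choose 2 * s + 1 < n)
    (ℱ : Finset (Finset (Fin n)))
    (huniform : ∀ F ∈ ℱ, F.card = k)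
    (hL : ∀ E ∈ ℱ, ∀ F ∈ ℱ, E ≠ F → (E ∩ F).card ∈ Finset.Icc 1 s)
    (hcard : ℱ.card = (n - 1).choose s) :
    (ℱ.inf id).Nonempty := by
  rw [nonempty_iff_ne_empty]
  intro hinf
  have hsq : k * k * s < n - 1 :=
    calc k * k * s = k ^ 2 * s := by ring
      _ ≤ (k ^ 2).choose 2 * s := Nat.mul_le_mul_right s (Nat.le_choose_two (by nlinarith))
      _ < n - 1 := by omega
  have hsn : s < n - 1 :=
    (Nat.le_mul_of_pos_left s (Nat.mul_pos (by omega) (by omega))).trans_lt hsq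
  have hℱ : (ℱ : Set (Finset (Fin n))).Intersecting := fun E hE F hF => by
    rw [not_disjoint_iff_nonempty_inter, ← card_pos]
    obtain rfl | hEF := eq_or_ne E F
    · rw [inter_self, huniform E hE]; omega
    · exact (mem_Icc.mp (hL E hE F hF hEF)).1
  have hpair : ∀ x y : Fin n, x ≠ y → #{F ∈ ℱ | {x, y} ⊆ F} ≤ (n - 2).choose (s - 1) := by
    intro x y hxy
    have h := card_filter_superset_mul_choose_le huniform
      (fun E hE F hF hEF => (mem_Icc.mp (hL E hE F hF hEF)).2) {x, y} (m := s - 1)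
      (by rw [card_pair hxy]; omega)
    rw [card_pair hxy, Fintype.card_fin] at h
    exact le_of_mul_le_of_one_le_left h (Nat.choose_pos (by omega))
  have hbound := card_le_of_intersecting_of_inf_eq_empty huniform hℱ hinf hpair
  have hlt := Nat.mul_choose_pred_lt_choose hs hsn.le hsq
  rw [hcard, show n - 2 = n - 1 - 1 by omega] at hbound
  omega

/-- If 0 < s < k ≤ n, n > C(k²,2)·s + 1, and ℱ is a {1,…,s}-intersecting
k-uniform family of subsets of [n] of size exactly C(n-1, s), then the members
of ℱ have a common element. -/
theorem stmt_7 (n k s : ℕ) (hs : 0 < s) (hsk : s < k) (hkn : k ≤ n)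
    (hn : (k ^ 2).choose 2 * s + 1 < n)
    (ℱ : Finset (Finset (Fin n)))
    (huniform : ∀ F ∈ ℱ, F.card = k)
    (hL : ∀ E ∈ ℱ, ∀ F ∈ ℱ, E ≠ F → (E ∩ F).card ∈ Finset.Icc 1 s)
    (hcard : ℱ.card = (n - 1).choose s) :
    (ℱ.inf id).Nonempty :=
  stmt_7_general n k s hs hsk hn ℱ huniform hL hcard
end

section
/- Let n, k, t be integers with 0 < t < k < n, and suppose n ≥ (k−t)·C(k², t+1) + t. Let ℱ be a t-intersecting, k-uniform family of subsets of [n]. Then |ℱ| ≤ C(n−t, k−t). -/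
section EKRaux

variable {n : ℕ}

/-- Star bound: the number of k-uniform sets containing a fixed s-set is at most
C(n-s, k-s). -/
lemma ekr_star_bound (k s : ℕ) (ℱ : Finset (Finset (Fin n)))
    (huniform : ∀ F ∈ ℱ, F.card = k)
    (T : Finset (Fin n)) (hT : T.card = s) :
    (ℱ.filter (fun F => T ⊆ F)).card ≤ (n - s).choose (k - s) := by
  classical
  have key : ∀ F ∈ ℱ.filter (fun F => T ⊆ F),
      F \ T ∈ (Finset.univ \ T).powersetCard (k - s) := by
    intro F hF
    simp only [Finset.mem_filter] at hF
    rw [Finset.mem_powersetCard]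
    constructor
    · intro x hx
      exact Finset.mem_sdiff.mpr ⟨Finset.mem_univ x, (Finset.mem_sdiff.mp hx).2⟩
    · rw [Finset.card_sdiff_of_subset hF.2, huniform F hF.1, hT]
  have hinj : Set.InjOn (fun F => F \ T) (ℱ.filter (fun F => T ⊆ F)) := by
    intro F hF G hG h
    simp only [Finset.coe_filter, Set.mem_setOf_eq] at hF hG
    have : F \ T ∪ T = G \ T ∪ T := by simp only at h; rw [h]
    rwa [Finset.sdiff_union_of_subset hF.2, Finset.sdiff_union_of_subset hG.2] at this
  have := Finset.card_le_card_of_injOn _ key hinj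
  rwa [Finset.card_powersetCard, Finset.card_sdiff_of_subset (Finset.subset_univ T),
    Finset.card_univ, Fintype.card_fin, hT] at this

/-- Kernel construction: if no t-set is contained in every member, there is a set X
of size ≤ k² meeting every member in at least t+1 points. -/
lemma ekr_kernel (k t : ℕ) (ht : 0 < t) (htk : t < k)
    (ℱ : Finset (Finset (Fin n)))
    (huniform : ∀ F ∈ ℱ, F.card = k)
    (hinter : ∀ E ∈ ℱ, ∀ F ∈ ℱ, t ≤ (E ∩ F).card)
    (hno : ∀ T : Finset (Fin n), T.card = t → ∃ F ∈ ℱ, ¬ T ⊆ F)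
    (hne : ℱ.Nonempty) :
    ∃ X : Finset (Fin n), X.card ≤ k ^ 2 ∧ ∀ F ∈ ℱ, t + 1 ≤ (F ∩ X).card := by
  classical
  obtain ⟨F1, hF1⟩ := hne
  -- strong induction on the size of the current "intersection" S
  have main : ∀ m : ℕ, ∀ S X : Finset (Fin n), S.card = m →
      (∀ F ∈ ℱ, t ≤ (F ∩ X).card) →
      (∀ F ∈ ℱ, (F ∩ X).card = t → F ∩ X ⊆ S) →
      X.card + (k - t) * S.card ≤ k + (k - t) * k →
      ∃ X' : Finset (Fin n), X'.card ≤ k ^ 2 ∧ ∀ F ∈ ℱ, t + 1 ≤ (F ∩ X').card := by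
    intro m
    induction m using Nat.strong_induction_on with
    | _ m ih =>
      intro S X hSm hXlb hprop hbound
      by_cases hS : S.card < t
      · refine ⟨X, ?_, ?_⟩
        · have h1 : X.card ≤ k + (k - t) * k := le_trans (Nat.le_add_right _ _) hbound
          have h2 : k + (k - t) * k ≤ k ^ 2 := by
            have h3 : (k - t) * k ≤ (k - 1) * k :=
              Nat.mul_le_mul_right _ (Nat.sub_le_sub_left ht k)
            have h4 : (k - 1) * k = k * k - k := Nat.sub_one_mul k k
            have h5 : k ≤ k * k := Nat.le_mul_of_pos_left k (by omega)
            have h6 : k ^ 2 = k * k := sq k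
            omega
          omega
        · intro F hF
          rcases Nat.lt_or_ge (F ∩ X).card (t + 1) with hlt | hge
          · have heq : (F ∩ X).card = t := le_antisymm (by omega) (hXlb F hF)
            have := Finset.card_le_card (hprop F hF heq)
            omega
          · exact hge
      · push_neg at hS
        obtain ⟨T, hTS, hTc⟩ := Finset.exists_subset_card_eq hS
        obtain ⟨F2, hF2, hTF2⟩ := hno T hTc
        set S' := S ∩ F2 with hS'def
        set X' := X ∪ F2 with hX'def
        have hSlt : S'.card < S.card := by
          apply Finset.card_lt_card
          refine ⟨Finset.inter_subset_left, fun hsub => hTF2 fun x hx => ?_⟩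
          exact (Finset.mem_inter.mp (hsub (hTS hx))).2
        have hXlb' : ∀ F ∈ ℱ, t ≤ (F ∩ X').card := by
          intro F hF
          exact le_trans (hXlb F hF)
            (Finset.card_le_card (Finset.inter_subset_inter_left Finset.subset_union_left))
        have hprop' : ∀ F ∈ ℱ, (F ∩ X').card = t → F ∩ X' ⊆ S' := by
          intro F hF heq
          have h1 : F ∩ X ⊆ F ∩ X' :=
            Finset.inter_subset_inter_left Finset.subset_union_left
          have h2 : F ∩ F2 ⊆ F ∩ X' :=
            Finset.inter_subset_inter_left Finset.subset_union_right
          have e1 : F ∩ X = F ∩ X' :=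
            Finset.eq_of_subset_of_card_le h1 (by rw [heq]; exact hXlb F hF)
          have e2 : F ∩ F2 = F ∩ X' :=
            Finset.eq_of_subset_of_card_le h2 (by rw [heq]; exact hinter F hF F2 hF2)
          have hs : F ∩ X' ⊆ S := e1 ▸ hprop F hF (e1 ▸ heq)
          have hf2 : F ∩ X' ⊆ F2 := e2 ▸ le_trans Finset.inter_subset_right (le_refl _)
          exact Finset.subset_inter hs hf2
        have hcard : X'.card ≤ X.card + (k - t) := by
          have hu : (F2 \ X).card + X.card = (F2 ∪ X).card := Finset.card_sdiff_add_card F2 X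
          have hXX' : X'.card = (F2 ∪ X).card := by rw [hX'def, Finset.union_comm]
          have hF2c : F2.card = k := huniform F2 hF2
          have hint : t ≤ (F2 ∩ X).card := hXlb F2 hF2
          have hsd : (F2 \ X).card + (F2 ∩ X).card = F2.card :=
            Finset.card_sdiff_add_card_inter F2 X
          omega
        have hbound' : X'.card + (k - t) * S'.card ≤ k + (k - t) * k := by
          have : (k - t) * S'.card + (k - t) ≤ (k - t) * S.card := by
            have : S'.card + 1 ≤ S.card := hSlt
            calc (k - t) * S'.card + (k - t) = (k - t) * (S'.card + 1) := by ring
              _ ≤ (k - t) * S.card := Nat.mul_le_mul_left _ this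
          omega
        exact ih S'.card (hSm ▸ hSlt) S' X' rfl hXlb' hprop' hbound'
  apply main F1.card F1 F1 rfl
  · intro F hF; exact hinter F hF F1 hF1
  · intro F hF _; exact Finset.inter_subset_right
  · rw [huniform F1 hF1]

end EKRaux

/-- EKR special case: if 0 < t < k < n, n ≥ (k-t)·C(k², t+1) + t, and ℱ is a
t-intersecting k-uniform family of subsets of [n], then |ℱ| ≤ C(n-t, k-t). -/
theorem stmt_10 (n k t : ℕ) (ht : 0 < t) (htk : t < k) (hkn : k < n)
    (hn : (k - t) * (k ^ 2).choose (t + 1) + t ≤ n)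
    (ℱ : Finset (Finset (Fin n)))
    (huniform : ∀ F ∈ ℱ, F.card = k)
    (hinter : ∀ E ∈ ℱ, ∀ F ∈ ℱ, t ≤ (E ∩ F).card) :
    ℱ.card ≤ (n - t).choose (k - t) := by
  classical
  rcases ℱ.eq_empty_or_nonempty with rfl | hne
  · simp
  by_cases hstar : ∃ T : Finset (Fin n), T.card = t ∧ ∀ F ∈ ℱ, T ⊆ F
  · obtain ⟨T, hTc, hTall⟩ := hstar
    have := ekr_star_bound k t ℱ huniform T hTc
    rwa [Finset.filter_true_of_mem hTall] at this
  · push_neg at hstar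
    have hno : ∀ T : Finset (Fin n), T.card = t → ∃ F ∈ ℱ, ¬ T ⊆ F := by
      intro T hT
      rcases hstar T hT with ⟨F, hF, hnsub⟩
      exact ⟨F, hF, hnsub⟩
    obtain ⟨X, hXc, hX⟩ := ekr_kernel k t ht htk ℱ huniform hinter hno hne
    -- cover by (t+1)-subsets of X
    have hsub : ℱ ⊆ (X.powersetCard (t + 1)).biUnion
        (fun T => ℱ.filter (fun F => T ⊆ F)) := by
      intro F hF
      obtain ⟨T, hTsub, hTcard⟩ := Finset.exists_subset_card_eq (hX F hF)
      rw [Finset.mem_biUnion]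
      refine ⟨T, Finset.mem_powersetCard.mpr
        ⟨hTsub.trans Finset.inter_subset_right, hTcard⟩,
        Finset.mem_filter.mpr ⟨hF, hTsub.trans Finset.inter_subset_left⟩⟩
    have hcount : ℱ.card ≤
        (k ^ 2).choose (t + 1) * (n - (t + 1)).choose (k - (t + 1)) := by
      calc ℱ.card ≤ ((X.powersetCard (t + 1)).biUnion
            (fun T => ℱ.filter (fun F => T ⊆ F))).card := Finset.card_le_card hsub
        _ ≤ ∑ T ∈ X.powersetCard (t + 1), (ℱ.filter (fun F => T ⊆ F)).card :=
            Finset.card_biUnion_le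
        _ ≤ ∑ T ∈ X.powersetCard (t + 1), (n - (t + 1)).choose (k - (t + 1)) := by
            apply Finset.sum_le_sum
            intro T hT
            exact ekr_star_bound k (t + 1) ℱ huniform T
              (Finset.mem_powersetCard.mp hT).2
        _ = (X.powersetCard (t + 1)).card * (n - (t + 1)).choose (k - (t + 1)) := by
            rw [Finset.sum_const, smul_eq_mul]
        _ ≤ (k ^ 2).choose (t + 1) * (n - (t + 1)).choose (k - (t + 1)) := by
            rw [Finset.card_powersetCard]
            exact Nat.mul_le_mul_right _ (Nat.choose_le_choose _ hXc)
    -- arithmetic: C(k²,t+1)·C(n-t-1,k-t-1) ≤ C(n-t,k-t)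
    refine le_trans hcount ?_
    set a := n - t - 1 with ha
    set b := k - t - 1 with hb
    have hna : n - (t + 1) = a := by omega
    have hkb : k - (t + 1) = b := by omega
    have hnt : n - t = a + 1 := by omega
    have hkt : k - t = b + 1 := by omega
    rw [hna, hkb, hnt, hkt]
    have hid : (a + 1) * a.choose b = (a + 1).choose (b + 1) * (b + 1) :=
      Nat.add_one_mul_choose_eq a b
    have hlb : (b + 1) * (k ^ 2).choose (t + 1) ≤ a + 1 := by
      have : (k - t) * (k ^ 2).choose (t + 1) ≤ n - t := by omega
      rw [hkt, hnt] at this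
      exact this
    have key : (k ^ 2).choose (t + 1) * a.choose b * (b + 1) ≤
        (a + 1).choose (b + 1) * (b + 1) := by
      calc (k ^ 2).choose (t + 1) * a.choose b * (b + 1)
          = ((b + 1) * (k ^ 2).choose (t + 1)) * a.choose b := by ring
        _ ≤ (a + 1) * a.choose b := Nat.mul_le_mul_right _ hlb
        _ = (a + 1).choose (b + 1) * (b + 1) := hid
    exact Nat.le_of_mul_le_mul_right key (Nat.succ_pos b)
end

section
/- Let n, k, t be integers with 0 < t < k ≤ n, and suppose n > (k−t)·C(k², t+1) + t. Let ℱ be a t-intersecting, k-uniform family of subsets of [n] with |ℱ| = C(n−t, k−t). Then there exists T ⊆ [n] with |T| = t such that T ⊆ F for every F ∈ ℱ. -/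
/-!
Fix A ∈ ℱ. If no t-set lies in every member of ℱ, then each F ∈ ℱ contains one of the
C(k, t) t-subsets T of A, and for each such T some G ∈ ℱ does not contain T; every F ⊇ T must then meet
G \ T, so F contains one of at most k sets T ∪ {x} of size t + 1, each in at most
C(n-t-1, k-t-1) members of ℱ. Hence |ℱ| ≤ k·C(k,t)·C(n-t-1, k-t-1), which with
C(n-t, k-t) = (n-t)/(k-t)·C(n-t-1, k-t-1) forces n - t ≤ (k-t)·k·C(k,t) ≤ (k-t)·C(k², t+1).
-/

open Finset

theorem Nat.mul_choose_le_choose_sq {k t : ℕ} (htk : t < k) :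
    k * k.choose t ≤ (k ^ 2).choose (t + 1) := by
  obtain rfl | hk : k = 1 ∨ 2 ≤ k := by omega
  · obtain rfl : t = 0 := by omega
    simp
  -- Vandermonde: choose t of the first k elements and one of the remaining k² - k.
  have hsplit : k ^ 2 = k + (k ^ 2 - k) := (Nat.add_sub_cancel' (Nat.le_self_pow two_ne_zero k)).symm
  have hk' : k ≤ k ^ 2 - k := by rw [sq]; have := Nat.mul_le_mul_right k hk; omega
  calc k * k.choose t ≤ k.choose t * (k ^ 2 - k).choose 1 := by
        rw [Nat.choose_one_right, mul_comm]; exact Nat.mul_le_mul_left _ hk'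
    _ ≤ ∑ ij ∈ antidiagonal (t + 1), k.choose ij.1 * (k ^ 2 - k).choose ij.2 :=
        single_le_sum (f := fun ij : ℕ × ℕ => k.choose ij.1 * (k ^ 2 - k).choose ij.2)
          (a := (t, 1)) (fun _ _ => Nat.zero_le _) (mem_antidiagonal.2 rfl)
    _ = (k ^ 2).choose (t + 1) := by rw [← Nat.add_choose_eq, ← hsplit]

theorem Nat.le_mul_of_choose_le_mul_choose_pred {a b m : ℕ} (hb : 0 < b) (hba : b ≤ a)
    (h : a.choose b ≤ m * (a - 1).choose (b - 1)) : a ≤ b * m := by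
  have hpos : 0 < (a - 1).choose (b - 1) := Nat.choose_pos (by omega)
  have hid : a * (a - 1).choose (b - 1) = a.choose b * b := by
    have := Nat.add_one_mul_choose_eq (a - 1) (b - 1)
    rwa [Nat.sub_add_cancel (by omega), Nat.sub_add_cancel hb] at this
  refine Nat.le_of_mul_le_mul_right ?_ hpos
  calc a * (a - 1).choose (b - 1) = a.choose b * b := hid
    _ ≤ m * (a - 1).choose (b - 1) * b := Nat.mul_le_mul_right _ h
    _ = b * m * (a - 1).choose (b - 1) := by ring

namespace Finset

variable {α : Type*} [DecidableEq α]

theorem card_le_card_mul_of_forall_exists_subset {ι : Type*} (ℱ : Finset (Finset α))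
    (s : Finset ι) (f : ι → Finset α) (m : ℕ) (hcover : ∀ F ∈ ℱ, ∃ i ∈ s, f i ⊆ F)
    (hbound : ∀ i ∈ s, #{F ∈ ℱ | f i ⊆ F} ≤ m) : #ℱ ≤ #s * m := by
  refine (card_le_card fun F hF => ?_).trans (card_biUnion_le_card_mul s _ m hbound)
  obtain ⟨i, hi, hiF⟩ := hcover F hF
  exact mem_biUnion.2 ⟨i, hi, mem_filter.2 ⟨hF, hiF⟩⟩

theorem card_le_choose_of_forall_card_eq_of_subset [Fintype α] (S : Finset α)
    (𝒢 : Finset (Finset α)) {k : ℕ} (h : ∀ F ∈ 𝒢, #F = k ∧ S ⊆ F) :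
    #𝒢 ≤ (Fintype.card α - #S).choose (k - #S) := by
  rw [← card_compl, ← card_powersetCard]
  refine card_le_card_of_injOn (· \ S) (fun F hF => ?_) (fun F hF G hG hFG => ?_)
  · obtain ⟨hk, hS⟩ := h F hF
    exact mem_powersetCard.2 ⟨fun x hx => mem_compl.2 (mem_sdiff.1 hx).2,
      by rw [card_sdiff_of_subset hS, hk]⟩
  · rw [← sdiff_union_of_subset (h F hF).2, ← sdiff_union_of_subset (h G hG).2]
    exact congrArg (· ∪ S) hFG

theorem exists_mem_sdiff_of_card_le_card_inter {F G T : Finset α} {t : ℕ} (hT : #T ≤ t)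
    (hTG : ¬ T ⊆ G) (hFG : t ≤ #(F ∩ G)) : ∃ x ∈ G \ T, x ∈ F := by
  by_contra! hcon
  have hsub : F ∩ G ⊆ T ∩ G := fun x hx => by
    obtain ⟨hxF, hxG⟩ := mem_inter.1 hx
    by_contra hxT
    exact hcon x (mem_sdiff.2 ⟨hxG, fun h => hxT (mem_inter.2 ⟨h, hxG⟩)⟩) hxF
  have hssub : T ∩ G ⊂ T := ⟨inter_subset_left, fun h => hTG fun x hx => (mem_inter.1 (h hx)).2⟩
  have := card_le_card hsub
  have := card_lt_card hssub
  omega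


theorem card_filter_superset_le [Fintype α] {ℱ : Finset (Finset α)} {G T : Finset α}
    {k t : ℕ} (huniform : ∀ F ∈ ℱ, #F = k) (hG : #G = k) (hinter : ∀ F ∈ ℱ, t ≤ #(F ∩ G))
    (hT : #T = t) (hTG : ¬ T ⊆ G) :
    #{F ∈ ℱ | T ⊆ F} ≤ k * (Fintype.card α - (t + 1)).choose (k - (t + 1)) := by
  calc #{F ∈ ℱ | T ⊆ F}
      ≤ #(G \ T) * (Fintype.card α - (t + 1)).choose (k - (t + 1)) := by
        refine card_le_card_mul_of_forall_exists_subset _ (G \ T) (insert · T) _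
          (fun F hF => ?_) (fun x hx => ?_)
        · obtain ⟨hFℱ, hTF⟩ := mem_filter.1 hF
          obtain ⟨x, hx, hxF⟩ := exists_mem_sdiff_of_card_le_card_inter hT.le hTG (hinter F hFℱ)
          exact ⟨x, hx, insert_subset hxF hTF⟩
        · have hcard : #(insert x T) = t + 1 := by
            rw [card_insert_of_notMem (mem_sdiff.1 hx).2, hT]
          refine hcard ▸ card_le_choose_of_forall_card_eq_of_subset _ _ fun F hF => ?_
          simp only [mem_filter] at hF
          exact ⟨huniform F hF.1.1, hF.2⟩
    _ ≤ k * (Fintype.card α - (t + 1)).choose (k - (t + 1)) :=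
        Nat.mul_le_mul_right _ (hG ▸ card_le_card sdiff_subset)

theorem card_le_of_not_exists_common_subset [Fintype α] {ℱ : Finset (Finset α)} {k t : ℕ}
    (huniform : ∀ F ∈ ℱ, #F = k) (hinter : ∀ E ∈ ℱ, ∀ F ∈ ℱ, t ≤ #(E ∩ F))
    (hcommon : ¬ ∃ T : Finset α, #T = t ∧ ∀ F ∈ ℱ, T ⊆ F) :
    #ℱ ≤ k * k.choose t * (Fintype.card α - (t + 1)).choose (k - (t + 1)) := by
  obtain rfl | ⟨A, hA⟩ := ℱ.eq_empty_or_nonempty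
  · simp
  push Not at hcommon
  calc #ℱ ≤ #(A.powersetCard t) * (k * (Fintype.card α - (t + 1)).choose (k - (t + 1))) := by
        refine card_le_card_mul_of_forall_exists_subset ℱ _ id _ (fun F hF => ?_)
          (fun T hT => ?_)
        · obtain ⟨T, hTFA, hT⟩ := exists_subset_card_eq (hinter F hF A hA)
          exact ⟨T, mem_powersetCard.2 ⟨hTFA.trans inter_subset_right, hT⟩,
            hTFA.trans inter_subset_left⟩
        · obtain ⟨-, hT⟩ := mem_powersetCard.1 hT
          obtain ⟨G, hG, hTG⟩ := hcommon T hT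
          exact card_filter_superset_le huniform (huniform G hG)
            (fun F hF => hinter F hF G hG) hT hTG
    _ = k * k.choose t * (Fintype.card α - (t + 1)).choose (k - (t + 1)) := by
        rw [card_powersetCard, huniform A hA]; ring

end Finset

theorem stmt_11_general (n k t : ℕ) (htk : t < k) (hkn : k ≤ n)
    (hn : (k - t) * (k ^ 2).choose (t + 1) + t < n)
    (ℱ : Finset (Finset (Fin n)))
    (huniform : ∀ F ∈ ℱ, F.card = k)
    (hinter : ∀ E ∈ ℱ, ∀ F ∈ ℱ, t ≤ (E ∩ F).card)
    (hcard : ℱ.card = (n - t).choose (k - t)) :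
    ∃ T : Finset (Fin n), T.card = t ∧ ∀ F ∈ ℱ, T ⊆ F := by
  by_contra hcommon
  have hbound := card_le_of_not_exists_common_subset huniform hinter hcommon
  rw [hcard, Fintype.card_fin, Nat.sub_add_eq, Nat.sub_add_eq] at hbound
  have hlinear : n - t ≤ (k - t) * (k * k.choose t) :=
    Nat.le_mul_of_choose_le_mul_choose_pred (by omega) (by omega) hbound
  have hsq : (k - t) * (k * k.choose t) ≤ (k - t) * (k ^ 2).choose (t + 1) :=
    Nat.mul_le_mul_left _ (Nat.mul_choose_le_choose_sq htk)
  omega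

/-- EKR extremal families: if 0 < t < k ≤ n, n > (k-t)·C(k², t+1) + t, and ℱ is
a t-intersecting k-uniform family of subsets of [n] with |ℱ| = C(n-t, k-t), then
some t-element set T is contained in every member of ℱ. -/
theorem stmt_11 (n k t : ℕ) (ht : 0 < t) (htk : t < k) (hkn : k ≤ n)
    (hn : (k - t) * (k ^ 2).choose (t + 1) + t < n)
    (ℱ : Finset (Finset (Fin n)))
    (huniform : ∀ F ∈ ℱ, F.card = k)
    (hinter : ∀ E ∈ ℱ, ∀ F ∈ ℱ, t ≤ (E ∩ F).card)
    (hcard : ℱ.card = (n - t).choose (k - t)) :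
    ∃ T : Finset (Fin n), T.card = t ∧ ∀ F ∈ ℱ, T ⊆ F :=
  stmt_11_general n k t htk hkn hn ℱ huniform hinter hcard
end

section
/- Let 0 < s ≤ k ≤ n be positive integers, L a set of s nonnegative integers, and ℱ an L-intersecting, k-uniform family of subsets of [n]. Then |ℱ| ≤ C(n, s). -/
/-!
Polynomial method on the `k`-slice. To `F ∈ ℱ` attach the function
`A ↦ ∏_{l ∈ L, l < k} (|A ∩ F| - l)` on `k`-sets `A`. Evaluated at the members of `ℱ` these
functions form a diagonal matrix with nonzero diagonal, so they are linearly independent. Each is a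
polynomial of degree at most `s` in the coordinates `[i ∈ A]`, i.e. a combination of the monomials
`x_I = [I ⊆ A]` with `|I| ≤ s`. On the slice `∑_{i ∉ J} x_{J ∪ {i}} = (k - |J|) x_J`, so for
`s ≤ k` the monomials with `|I| = s` already span this space, whose dimension is thus at most
`C(n, s)`.
-/

open Finset Submodule Module

lemma linearIndependent_of_apply_eq_zero_of_ne {ι X K : Type*} [Fintype ι] [Field K]
    {f : ι → X → K} (x : ι → X) (hdiag : ∀ i, f i (x i) ≠ 0)
    (hoff : ∀ i j, i ≠ j → f i (x j) = 0) : LinearIndependent K f := by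
  rw [Fintype.linearIndependent_iff]
  intro c hc j
  have hj := congrFun hc (x j)
  rw [Finset.sum_apply, Finset.sum_eq_single j (fun i _ hij => by simp [hoff i j hij])
    (by simp)] at hj
  simpa [hdiag j] using hj

lemma Finset.card_inter_lt_of_card_eq {α : Type*} [DecidableEq α] {k : ℕ} {E F : Finset α}
    (hE : E.card = k) (hF : F.card = k) (hEF : E ≠ F) : (E ∩ F).card < k := by
  refine (card_le_card inter_subset_left |>.trans_eq hE).lt_of_ne fun h => hEF ?_
  have hE' : E ∩ F = E := eq_of_subset_of_card_le inter_subset_left (by omega)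
  exact eq_of_subset_of_card_le (hE' ▸ inter_subset_right) (by omega)

namespace RayChaudhuriWilson

variable {α : Type*} [DecidableEq α] {k : ℕ}

abbrev Slice (α : Type*) (k : ℕ) := {A : Finset α // A.card = k}

def subsetIndicator (k : ℕ) (I : Finset α) : Slice α k → ℝ :=
  fun A => if I ⊆ A.1 then 1 else 0

def lowDegree (α : Type*) [DecidableEq α] (k d : ℕ) : Submodule ℝ (Slice α k → ℝ) :=
  span ℝ (subsetIndicator k '' {I | I.card ≤ d})

lemma subsetIndicator_mem_lowDegree {d : ℕ} {I : Finset α} (hI : I.card ≤ d) :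
    subsetIndicator k I ∈ lowDegree α k d :=
  subset_span ⟨I, hI, rfl⟩

lemma lowDegree_mono {d e : ℕ} (h : d ≤ e) : lowDegree α k d ≤ lowDegree α k e :=
  span_mono (Set.image_mono fun _ hI => le_trans hI h)

def intersectionCard (k : ℕ) (F : Finset α) : Slice α k → ℝ :=
  fun A => ((A.1 ∩ F).card : ℝ)

lemma intersectionCard_mul_subsetIndicator (F I : Finset α) :
    intersectionCard k F * subsetIndicator k I
      = ∑ i ∈ F, subsetIndicator k (insert i I) := by
  funext A
  simp only [Pi.mul_apply, intersectionCard, subsetIndicator, Finset.sum_apply,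
    insert_subset_iff]
  split_ifs with hIA
  · simp [hIA, inter_comm]
  · simp [hIA]

lemma intersectionCard_mul_mem_lowDegree {d : ℕ} (F : Finset α) {f : Slice α k → ℝ}
    (hf : f ∈ lowDegree α k d) :
    intersectionCard k F * f ∈ lowDegree α k (d + 1) := by
  suffices (lowDegree α k d).map (LinearMap.mulLeft ℝ (intersectionCard k F))
      ≤ lowDegree α k (d + 1) from this ⟨f, hf, rfl⟩
  rw [lowDegree, map_span_le]
  rintro _ ⟨I, hI, rfl⟩
  rw [LinearMap.mulLeft_apply, intersectionCard_mul_subsetIndicator]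
  exact sum_mem fun i _ => subsetIndicator_mem_lowDegree
    ((card_insert_le i I).trans (Nat.succ_le_succ hI))

def intersectionPoly (k : ℕ) (F : Finset α) (L : Finset ℕ) : Slice α k → ℝ :=
  fun A => ∏ l ∈ L, (((A.1 ∩ F).card : ℝ) - l)

lemma intersectionPoly_mem_lowDegree (F : Finset α) (L : Finset ℕ) :
    intersectionPoly k F L ∈ lowDegree α k L.card := by
  induction L using Finset.induction with
  | empty =>
    have : intersectionPoly k F ∅ = subsetIndicator k ∅ := by
      funext A; simp [intersectionPoly, subsetIndicator]
    exact this ▸ subsetIndicator_mem_lowDegree le_rfl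
  | @insert l L hl ih =>
    have : intersectionPoly k F (insert l L) =
        intersectionCard k F * intersectionPoly k F L
          - (l : ℝ) • intersectionPoly k F L := by
      funext A
      simp only [intersectionPoly, intersectionCard, prod_insert hl, Pi.sub_apply, Pi.mul_apply,
        Pi.smul_apply, smul_eq_mul]
      ring
    rw [this, card_insert_of_notMem hl]
    exact sub_mem (intersectionCard_mul_mem_lowDegree F ih)
      (smul_mem _ _ (lowDegree_mono (Nat.le_succ _) ih))

lemma sum_subsetIndicator_insert [Fintype α] (J : Finset α) :
    ∑ i ∈ Jᶜ, subsetIndicator k (insert i J) = ((k - J.card : ℕ) : ℝ) • subsetIndicator k J := by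
  funext ⟨A, hA⟩
  simp only [Finset.sum_apply, Pi.smul_apply, subsetIndicator, insert_subset_iff, smul_eq_mul]
  split_ifs with hJA
  · simp only [hJA, and_true, sum_boole, mul_one, ← hA, ← card_sdiff_of_subset hJA]
    congr 2
    ext i
    simp [and_comm]
  · simp [hJA]

lemma subsetIndicator_mem_span_powersetCard [Fintype α] {d : ℕ} (hdk : d ≤ k) {J : Finset α}
    (hJ : J.card ≤ d) :
    subsetIndicator k J ∈
      span ℝ (↑((powersetCard d (univ : Finset α)).image (subsetIndicator k))) := by
  induction h : d - J.card generalizing J with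
  | zero => exact subset_span (mem_image_of_mem _ (mem_powersetCard_univ.2 (by omega)))
  | succ m ih =>
    have hk : ((k - J.card : ℕ) : ℝ) ≠ 0 := by exact_mod_cast (by omega)
    rw [← inv_smul_smul₀ hk (subsetIndicator k J), ← sum_subsetIndicator_insert]
    refine smul_mem _ _ (sum_mem fun i hi => ?_)
    have : (insert i J).card = J.card + 1 := card_insert_of_notMem (by simpa using hi)
    exact ih (by omega) (by omega)

lemma finrank_lowDegree_le [Fintype α] {d : ℕ} (hdk : d ≤ k) :
    finrank ℝ (lowDegree α k d) ≤ (Fintype.card α).choose d := by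
  have hle : lowDegree α k d ≤
      span ℝ (↑((powersetCard d (univ : Finset α)).image (subsetIndicator k))) := by
    rw [lowDegree, span_le]
    rintro _ ⟨J, hJ, rfl⟩
    exact subsetIndicator_mem_span_powersetCard hdk hJ
  calc finrank ℝ (lowDegree α k d)
      ≤ ((powersetCard d univ).image (subsetIndicator k)).card :=
        (Submodule.finrank_mono hle).trans (finrank_span_finset_le_card _)
    _ ≤ (powersetCard d (univ : Finset α)).card := card_image_le
    _ = (Fintype.card α).choose d := by rw [card_powersetCard, card_univ]

lemma linearIndependent_intersectionPoly {ℱ : Finset (Finset α)} {L : Finset ℕ}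
    (huniform : ∀ F ∈ ℱ, F.card = k) (hL : ∀ E ∈ ℱ, ∀ F ∈ ℱ, E ≠ F → (E ∩ F).card ∈ L) :
    LinearIndependent ℝ fun F : ℱ => intersectionPoly k F.1 (L.filter (· < k)) := by
  refine linearIndependent_of_apply_eq_zero_of_ne (fun F => ⟨F.1, huniform F F.2⟩)
    (fun F => ?_) (fun F E hFE => ?_)
  · simp only [intersectionPoly, inter_self, huniform F F.2]
    exact prod_ne_zero_iff.2 fun l hl => sub_ne_zero.2 (by
      exact_mod_cast ((mem_filter.1 hl).2.ne'))
  · have hEF : E.1 ≠ F.1 := fun h => hFE (Subtype.ext h).symm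
    have hlt := card_inter_lt_of_card_eq (huniform E E.2) (huniform F F.2) hEF
    exact prod_eq_zero (mem_filter.2 ⟨hL E E.2 F F.2 hEF, hlt⟩) (sub_self _)

end RayChaudhuriWilson

open RayChaudhuriWilson

theorem stmt_12_general (n k s : ℕ) (hsk : s ≤ k)
    (L : Finset ℕ) (hLcard : L.card = s)
    (ℱ : Finset (Finset (Fin n)))
    (huniform : ∀ F ∈ ℱ, F.card = k)
    (hL : ∀ E ∈ ℱ, ∀ F ∈ ℱ, E ≠ F → (E ∩ F).card ∈ L) :
    ℱ.card ≤ n.choose s := by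
  set f := fun F : ℱ => intersectionPoly k F.1 (L.filter (· < k))
  have hdeg : ∀ F, f F ∈ lowDegree (Fin n) k s := fun F =>
    lowDegree_mono (hLcard ▸ card_filter_le _ _) (intersectionPoly_mem_lowDegree _ _)
  calc ℱ.card = finrank ℝ (span ℝ (Set.range f)) := by
        rw [finrank_span_eq_card (linearIndependent_intersectionPoly huniform hL), Fintype.card_coe]
    _ ≤ finrank ℝ (lowDegree (Fin n) k s) :=
        Submodule.finrank_mono (span_le.2 (Set.range_subset_iff.2 hdeg))
    _ ≤ n.choose s := by simpa using finrank_lowDegree_le (α := Fin n) hsk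

/-- Ray-Chaudhuri–Wilson theorem: if L is a set of s nonnegative integers and ℱ
is an L-intersecting k-uniform family of subsets of [n] with 0 < s ≤ k ≤ n,
then |ℱ| ≤ C(n, s). -/
theorem stmt_12 (n k s : ℕ) (hs : 0 < s) (hsk : s ≤ k) (hkn : k ≤ n)
    (L : Finset ℕ) (hLcard : L.card = s)
    (ℱ : Finset (Finset (Fin n)))
    (huniform : ∀ F ∈ ℱ, F.card = k)
    (hL : ∀ E ∈ ℱ, ∀ F ∈ ℱ, E ≠ F → (E ∩ F).card ∈ L) :
    ℱ.card ≤ n.choose s :=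
  stmt_12_general n k s hsk L hLcard ℱ huniform hL
end
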